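/- arXiv:0711.2873 — 7 statements merged into one kernel-verified Lean document; each statement's English description precedes it below -/
import Mathlib

section
/- Let v be a vertex of the trellis with depth(v) = i ≥ 1 and let m ∈ ℕ. Then the m-th forward numerator satisfies the recursion α^(m)(v) = Σ_{e : fin(e) = v} λ(e) · Σ_{l=0}^{m} C(m,l) · g(e)^l · α^(m−l)(init(e)), where C(m,l) is the binomial coefficient. (Forward Recursion, Theorem 1 of the paper.) -/
open Finset

/-- `IsPath einit efin u v P` means the list of edges `P = e₁⋯e_L` is a path from
vertex `u` to vertex `v`: `init e₁ = u`, `fin e_L = v` and `fin e_j = init e_{j+1}`;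
the empty list is a path from every vertex to itself. -/
def IsPath {V E : Type*} (einit efin : E → V) : V → V → List E → Prop
  | u, v, [] => u = v
  | u, v, e :: es => einit e = u ∧ IsPath einit efin (efin e) v es

/-- The λ-label of a path: the product of the λ-labels of its edges. -/
noncomputable def pathLam {E : Type*} (lam : E → ℝ) (P : List E) : ℝ :=
  (P.map lam).prod

/-- The value `f(P)` of a path: the sum of the values `g(e)` of its edges. -/
noncomputable def pathF {E : Type*} (g : E → ℝ) (P : List E) : ℝ :=
  (P.map g).sum

/-- The `m`-th forward numerator `α^(m)(v) = Σ_{P : A → v} f(P)^m · λ(P)`. -/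
noncomputable def alphaNum {V E : Type*} (lam g : E → ℝ)
    (paths : V → V → Finset (List E)) (A : V) (m : ℕ) (v : V) : ℝ :=
  ∑ P ∈ paths A v, pathF g P ^ m * pathLam lam P

/-- The `m`-th backward numerator `β^(m)(v) = Σ_{P : v → B} f(P)^m · λ(P)`. -/
noncomputable def betaNum {V E : Type*} (lam g : E → ℝ)
    (paths : V → V → Finset (List E)) (B : V) (m : ℕ) (v : V) : ℝ :=
  ∑ P ∈ paths v B, pathF g P ^ m * pathLam lam P

lemma isPath_concat {V E : Type*} (einit efin : E → V) (u v : V) (e : E) :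
    ∀ P : List E, IsPath einit efin u v (P ++ [e]) ↔
      IsPath einit efin u (einit e) P ∧ efin e = v := by
  intro P
  induction P generalizing u with
  | nil => simp [IsPath]; tauto
  | cons a as ih => simp [IsPath, ih]; tauto

/-- **Forward Recursion** (Theorem 1). For a vertex `v` at depth `i ≥ 1`,
`α^(m)(v) = Σ_{e : fin(e) = v} λ(e) · Σ_{l=0}^{m} C(m,l) · g(e)^l · α^(m−l)(init(e))`. -/
theorem forward_recursion {V E : Type*} [Fintype V] [Fintype E] [DecidableEq V]
    (einit efin : E → V) (depth : V → ℕ) (n : ℕ)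
    (hdepth : ∀ e, depth (efin e) = depth (einit e) + 1)
    (A : V) (hA : depth A = 0) (B : V) (hB : depth B = n)
    (lam g : E → ℝ)
    (paths : V → V → Finset (List E))
    (hpaths : ∀ u v P, P ∈ paths u v ↔ IsPath einit efin u v P)
    (v : V) (i : ℕ) (hvi : depth v = i) (hi : 1 ≤ i) (m : ℕ) :
    alphaNum lam g paths A m v =
      ∑ e ∈ Finset.univ.filter (fun e => efin e = v),
        lam e * ∑ l ∈ Finset.range (m + 1),
          (m.choose l : ℝ) * g e ^ l * alphaNum lam g paths A (m - l) (einit e) := by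
  classical
  have hvA : v ≠ A := by
    intro h; rw [h, hA] at hvi; omega
  have hrhs : ∀ e : E, lam e * ∑ l ∈ Finset.range (m + 1),
      (m.choose l : ℝ) * g e ^ l * alphaNum lam g paths A (m - l) (einit e)
      = ∑ P ∈ paths A (einit e), (g e + pathF g P) ^ m * (pathLam lam P * lam e) := by
    intro e
    unfold alphaNum
    simp only [Finset.mul_sum]
    rw [Finset.sum_comm]
    refine Finset.sum_congr rfl fun P _ => ?_
    rw [add_pow, Finset.sum_mul]
    refine Finset.sum_congr rfl fun l _ => ?_
    ring
  calc alphaNum lam g paths A m v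
      = ∑ Q ∈ paths A v, pathF g Q ^ m * pathLam lam Q := rfl
    _ = ∑ x ∈ (Finset.univ.filter (fun e => efin e = v)).sigma
          (fun e => paths A (einit e)),
          (g x.1 + pathF g x.2) ^ m * (pathLam lam x.2 * lam x.1) := by
        refine Finset.sum_bij' (fun Q hQ => ⟨Q.getLast (by
            intro h
            rw [hpaths] at hQ
            rw [h] at hQ
            exact hvA hQ.symm), Q.dropLast⟩)
          (fun x _ => x.2 ++ [x.1]) ?_ ?_ ?_ ?_ ?_
        · intro Q hQ
          rw [hpaths] at hQ
          have hne : Q ≠ [] := by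
            intro h; rw [h] at hQ; exact hvA hQ.symm
          have hQ' := hQ
          rw [← List.dropLast_append_getLast hne, isPath_concat] at hQ'
          simp only [Finset.mem_sigma, Finset.mem_filter, Finset.mem_univ, true_and]
          exact ⟨hQ'.2, (hpaths _ _ _).mpr hQ'.1⟩
        · intro x hx
          simp only [Finset.mem_sigma, Finset.mem_filter, Finset.mem_univ, true_and] at hx
          rw [hpaths, isPath_concat]
          exact ⟨(hpaths _ _ _).mp hx.2, hx.1⟩
        · intro Q hQ
          have hne : Q ≠ [] := by
            intro h
            rw [hpaths, h] at hQ
            exact hvA hQ.symm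
          exact List.dropLast_append_getLast hne
        · intro x hx
          simp
        · intro Q hQ
          have hne : Q ≠ [] := by
            intro h
            rw [hpaths, h] at hQ
            exact hvA hQ.symm
          conv_lhs => rw [← List.dropLast_append_getLast hne]
          simp only [pathF, pathLam, List.map_append, List.sum_append,
            List.prod_append, List.map_cons, List.map_nil, List.sum_cons,
            List.sum_nil, List.prod_cons, List.prod_nil]
          ring
    _ = ∑ e ∈ Finset.univ.filter (fun e => efin e = v),
          ∑ P ∈ paths A (einit e), (g e + pathF g P) ^ m * (pathLam lam P * lam e) :=
        Finset.sum_sigma _ _ _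
    _ = _ := by
        refine Finset.sum_congr rfl fun e _ => (hrhs e).symm
end

section
/- Let v be a vertex of the trellis with depth(v) = i < n and let m ∈ ℕ. Then the m-th backward numerator satisfies the recursion β^(m)(v) = Σ_{e : init(e) = v} λ(e) · Σ_{l=0}^{m} C(m,l) · g(e)^l · β^(m−l)(fin(e)), where C(m,l) is the binomial coefficient. (Backward Recursion, Theorem 3 of the paper.) -/
open Finset

/-- **Backward Recursion** (Theorem 3). For a vertex `v` at depth `i < n`,
`β^(m)(v) = Σ_{e : init(e) = v} λ(e) · Σ_{l=0}^{m} C(m,l) · g(e)^l · β^(m−l)(fin(e))`. -/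
theorem backward_recursion {V E : Type*} [Fintype V] [Fintype E] [DecidableEq V]
    (einit efin : E → V) (depth : V → ℕ) (n : ℕ)
    (hdepth : ∀ e, depth (efin e) = depth (einit e) + 1)
    (A : V) (hA : depth A = 0) (B : V) (hB : depth B = n)
    (lam g : E → ℝ)
    (paths : V → V → Finset (List E))
    (hpaths : ∀ u v P, P ∈ paths u v ↔ IsPath einit efin u v P)
    (v : V) (i : ℕ) (hvi : depth v = i) (hi : i < n) (m : ℕ) :
    betaNum lam g paths B m v =
      ∑ e ∈ Finset.univ.filter (fun e => einit e = v),
        lam e * ∑ l ∈ Finset.range (m + 1),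
          (m.choose l : ℝ) * g e ^ l * betaNum lam g paths B (m - l) (efin e) := by

  classical
  have key : betaNum lam g paths B m v =
      ∑ x ∈ (Finset.univ.filter (fun e => einit e = v)).sigma
        (fun e => paths (efin e) B),
        pathF g (x.1 :: x.2) ^ m * pathLam lam (x.1 :: x.2) := by
    rw [betaNum]
    refine (Finset.sum_bij (fun x _ => x.1 :: x.2) ?_ ?_ ?_ ?_).symm
    · rintro ⟨e, P⟩ hx
      rw [Finset.mem_sigma, Finset.mem_filter] at hx
      rw [hpaths]
      exact ⟨hx.1.2, (hpaths _ _ _).1 hx.2⟩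
    · rintro ⟨e, P⟩ _ ⟨e', P'⟩ _ h
      simp only [List.cons.injEq] at h
      exact Sigma.ext h.1 (heq_of_eq h.2)
    · intro P hP
      rw [hpaths] at hP
      cases P with
      | nil =>
        exfalso
        have hvB : v = B := hP
        rw [hvB] at hvi
        omega
      | cons e es =>
        refine ⟨⟨e, es⟩, ?_, rfl⟩
        rw [Finset.mem_sigma, Finset.mem_filter]
        exact ⟨⟨Finset.mem_univ _, hP.1⟩, (hpaths _ _ _).2 hP.2⟩
    · intros; rfl
  rw [key, Finset.sum_sigma]
  refine Finset.sum_congr rfl fun e he => ?_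
  simp only [pathF, pathLam, List.map_cons, List.sum_cons, List.prod_cons]
  rw [Finset.mul_sum]
  simp only [betaNum, Finset.mul_sum]
  rw [Finset.sum_comm]
  refine Finset.sum_congr rfl fun P hP => ?_
  rw [add_pow, Finset.sum_mul]
  exact Finset.sum_congr rfl fun l hl => by simp only [pathF, pathLam]; ring
end

section
/- Fix a depth i with 1 ≤ i ≤ n, a c-label value x ∈ X, and m ∈ ℕ. Define the m-th symbol numerator Ω_i^(m)(x) = Σ_{P : A → B, c(e_i) = x} f(P)^m · λ(P), where e_i is the i-th edge of P. Then Ω_i^(m)(x) = Σ_{e : depth(fin(e)) = i, c(e) = x} λ(e) · Σ_{l=0}^{m} C(m,l) · β^(m−l)(fin(e)) · Σ_{k=0}^{l} C(l,k) · g(e)^k · α^(l−k)(init(e)). (Symbol Moment formula, Theorem 4 of the paper.) -/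
open Finset

lemma isPath_append {V E : Type*} (einit efin : E → V) (u v : V) (P Q : List E) :
    IsPath einit efin u v (P ++ Q) ↔ ∃ w, IsPath einit efin u w P ∧ IsPath einit efin w v Q := by
  induction P generalizing u with
  | nil => simp [IsPath]
  | cons e es ih =>
      simp only [List.cons_append, IsPath, List.append_eq, ih]
      constructor
      · rintro ⟨h1, w, h2, h3⟩; exact ⟨w, ⟨h1, h2⟩, h3⟩
      · rintro ⟨w, ⟨h1, h2⟩, h3⟩; exact ⟨h1, w, h2, h3⟩

lemma depth_isPath {V E : Type*} (einit efin : E → V) (depth : V → ℕ)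
    (hdepth : ∀ e, depth (efin e) = depth (einit e) + 1) (u v : V) (P : List E)
    (h : IsPath einit efin u v P) : depth v = depth u + P.length := by
  induction P generalizing u with
  | nil => simpa using congrArg depth h.symm
  | cons e es ih =>
      obtain ⟨h1, h2⟩ := h
      have := ih (efin e) h2
      rw [this, hdepth, h1]
      simp; ring

lemma tri_pow (a b c : ℝ) (m : ℕ) :
    (a + b + c) ^ m = ∑ l ∈ range (m + 1), (m.choose l : ℝ) * c ^ (m - l) *
      ∑ k ∈ range (l + 1), (l.choose k : ℝ) * b ^ k * a ^ (l - k) := by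
  rw [add_pow]
  refine Finset.sum_congr rfl fun l hl => ?_
  rw [show a + b = b + a by ring, add_pow, Finset.sum_mul, Finset.sum_mul, Finset.mul_sum]
  exact Finset.sum_congr rfl fun k hk => by ring

lemma key_sum {ι κ : Type*} (s : Finset ι) (t : Finset κ) (F1 L1 : ι → ℝ) (F2 L2 : κ → ℝ)
    (le ge : ℝ) (m : ℕ) :
    le * ∑ l ∈ range (m + 1), (m.choose l : ℝ) * (∑ Q ∈ t, F2 Q ^ (m - l) * L2 Q) *
        ∑ k ∈ range (l + 1), (l.choose k : ℝ) * ge ^ k * (∑ P ∈ s, F1 P ^ (l - k) * L1 P)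
      = ∑ P ∈ s, ∑ Q ∈ t, (F1 P + ge + F2 Q) ^ m * (L1 P * le * L2 Q) := by
  simp only [Finset.sum_mul, Finset.mul_sum]
  conv_lhs => enter [2,l]; rw [Finset.sum_comm]
  conv_lhs => rw [Finset.sum_comm]
  conv_lhs => enter [2,P,2,l]; rw [Finset.sum_comm]
  conv_lhs => enter [2,P]; rw [Finset.sum_comm]
  refine Finset.sum_congr rfl fun P _ => Finset.sum_congr rfl fun Q _ => ?_
  rw [tri_pow (F1 P) ge (F2 Q) m, Finset.sum_mul]
  refine Finset.sum_congr rfl fun l _ => ?_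
  rw [Finset.mul_sum, Finset.sum_mul]
  exact Finset.sum_congr rfl fun k _ => by ring

/-- **Symbol Moment formula** (Theorem 4). For a depth `1 ≤ i ≤ n` and c-label value `x`,
the `m`-th symbol numerator `Ω_i^(m)(x) = Σ_{P : A → B, c(e_i) = x} f(P)^m · λ(P)`
(where the `i`-th edge `e_i` of a path `P : A → B` is its unique edge with
`depth(fin(e_i)) = i`) satisfies
`Ω_i^(m)(x) = Σ_{e : depth(fin(e)) = i, c(e) = x} λ(e) · Σ_{l=0}^{m} C(m,l) · β^(m−l)(fin(e))
  · Σ_{k=0}^{l} C(l,k) · g(e)^k · α^(l−k)(init(e))`. -/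
theorem symbol_moment {V E X : Type*} [Fintype V] [Fintype E] [DecidableEq X]
    (einit efin : E → V) (depth : V → ℕ) (n : ℕ)
    (hdepth : ∀ e, depth (efin e) = depth (einit e) + 1)
    (A : V) (hA : depth A = 0) (B : V) (hB : depth B = n)
    (lam g : E → ℝ) (c : E → X)
    (paths : V → V → Finset (List E))
    (hpaths : ∀ u v P, P ∈ paths u v ↔ IsPath einit efin u v P)
    (i : ℕ) (hi1 : 1 ≤ i) (hin : i ≤ n) (x : X) (m : ℕ) :
    ∑ P ∈ (paths A B).filter (fun P => ∃ e ∈ P, depth (efin e) = i ∧ c e = x),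
        pathF g P ^ m * pathLam lam P =
      ∑ e ∈ Finset.univ.filter (fun e => depth (efin e) = i ∧ c e = x),
        lam e * ∑ l ∈ Finset.range (m + 1),
          (m.choose l : ℝ) * betaNum lam g paths B (m - l) (efin e) *
            ∑ k ∈ Finset.range (l + 1),
              (l.choose k : ℝ) * g e ^ k * alphaNum lam g paths A (l - k) (einit e) := by
  classical
  symm
  calc
    ∑ e ∈ Finset.univ.filter (fun e => depth (efin e) = i ∧ c e = x),
        lam e * ∑ l ∈ Finset.range (m + 1),
          (m.choose l : ℝ) * betaNum lam g paths B (m - l) (efin e) *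
            ∑ k ∈ Finset.range (l + 1),
              (l.choose k : ℝ) * g e ^ k * alphaNum lam g paths A (l - k) (einit e)
      = ∑ e ∈ Finset.univ.filter (fun e => depth (efin e) = i ∧ c e = x),
          ∑ P1 ∈ paths A (einit e), ∑ P2 ∈ paths (efin e) B,
            (pathF g P1 + g e + pathF g P2) ^ m *
              (pathLam lam P1 * lam e * pathLam lam P2) := by
        refine Finset.sum_congr rfl fun e _ => ?_
        simpa [betaNum, alphaNum] using
          key_sum (paths A (einit e)) (paths (efin e) B)
            (pathF g) (pathLam lam) (pathF g) (pathLam lam) (lam e) (g e) m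
    _ = ∑ p ∈ (Finset.univ.filter (fun e => depth (efin e) = i ∧ c e = x)).sigma
            (fun e => paths A (einit e) ×ˢ paths (efin e) B),
          (pathF g p.2.1 + g p.1 + pathF g p.2.2) ^ m *
            (pathLam lam p.2.1 * lam p.1 * pathLam lam p.2.2) := by
        rw [Finset.sum_sigma]
        refine Finset.sum_congr rfl fun e _ => ?_
        rw [Finset.sum_product]
    _ = ∑ P ∈ (paths A B).filter (fun P => ∃ e ∈ P, depth (efin e) = i ∧ c e = x),
          pathF g P ^ m * pathLam lam P := by
        refine Finset.sum_bij (fun p _ => p.2.1 ++ p.1 :: p.2.2) ?_ ?_ ?_ ?_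
        · rintro ⟨e, P1, P2⟩ hp
          simp only [Finset.mem_sigma, Finset.mem_filter, Finset.mem_univ, true_and,
            Finset.mem_product] at hp
          obtain ⟨⟨hd, hc⟩, h1, h2⟩ := hp
          rw [hpaths] at h1 h2
          simp only [Finset.mem_filter]
          refine ⟨(hpaths _ _ _).2 ?_, e, by simp, hd, hc⟩
          exact (isPath_append einit efin A B P1 (e :: P2)).2 ⟨einit e, h1, rfl, h2⟩
        · rintro ⟨e, P1, P2⟩ hp ⟨e', P1', P2'⟩ hp' heq
          simp only [Finset.mem_sigma, Finset.mem_filter, Finset.mem_univ, true_and,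
            Finset.mem_product] at hp hp'
          obtain ⟨⟨hd, hc⟩, h1, h2⟩ := hp
          obtain ⟨⟨hd', hc'⟩, h1', h2'⟩ := hp'
          rw [hpaths] at h1 h1'
          have hl : P1.length = P1'.length := by
            have e1 := depth_isPath einit efin depth hdepth A (einit e) P1 h1
            have e2 := depth_isPath einit efin depth hdepth A (einit e') P1' h1'
            have d1 : depth (einit e) + 1 = i := by rw [← hdepth, hd]
            have d2 : depth (einit e') + 1 = i := by rw [← hdepth, hd']
            omega
          obtain ⟨hP1, hrest⟩ := List.append_inj heq hl
          obtain ⟨he, hP2⟩ := List.cons_eq_cons.mp hrest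
          subst he hP1 hP2
          rfl
        · intro P hP
          simp only [Finset.mem_filter] at hP
          obtain ⟨hPmem, e, heP, hd, hc⟩ := hP
          obtain ⟨P1, P2, rfl⟩ := List.append_of_mem heP
          have hpath := (hpaths _ _ _).1 hPmem
          obtain ⟨w, h1, hw, h2⟩ := (isPath_append einit efin A B P1 (e :: P2)).1 hpath
          refine ⟨⟨e, P1, P2⟩, ?_, rfl⟩
          simp only [Finset.mem_sigma, Finset.mem_filter, Finset.mem_univ, true_and,
            Finset.mem_product]
          exact ⟨⟨hd, hc⟩, (hpaths _ _ _).2 (hw ▸ h1), (hpaths _ _ _).2 h2⟩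
        · rintro ⟨e, P1, P2⟩ _
          simp only [pathF, pathLam, List.map_append, List.sum_append, List.prod_append,
            List.map_cons, List.sum_cons, List.prod_cons]
          ring_nf
end

section
/- Fix a depth i with 0 ≤ i ≤ n and m ∈ ℕ. Then the m-th trellis numerator decomposes at depth i as θ^(m)(T) = Σ_{P : A → B} f(P)^m · λ(P) = Σ_{v : depth(v) = i} Σ_{l=0}^{m} C(m,l) · α^(l)(v) · β^(m−l)(v), where C(m,l) is the binomial coefficient. -/
open Finset

/-!
Cutting every path `A → B` at its unique vertex of depth `i` is a bijection between the paths
`A → B` and the pairs (path `A → v`, path `v → B`) with `depth v = i`. Along this bijection `λ` is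
multiplicative and `f` is additive, so `f(P)^m λ(P)` expands by the binomial theorem into
products of a forward and a backward term.
-/

section Trellis

variable {V E : Type*} {einit efin : E → V}

theorem isPath_append_iff {u w : V} {P Q : List E} :
    IsPath einit efin u w (P ++ Q) ↔ ∃ v, IsPath einit efin u v P ∧ IsPath einit efin v w Q := by
  induction P generalizing u with
  | nil => simp [IsPath]
  | cons e es ih => simp [IsPath, ih, and_assoc]

theorem IsPath.target_unique {u v v' : V} {P : List E} (h : IsPath einit efin u v P)
    (h' : IsPath einit efin u v' P) : v = v' := by
  induction P generalizing u with
  | nil => exact h.symm.trans h'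
  | cons e es ih => exact ih h.2 h'.2

theorem IsPath.depth_eq_add_length {depth : V → ℕ}
    (hdepth : ∀ e, depth (efin e) = depth (einit e) + 1) {u v : V} {P : List E}
    (h : IsPath einit efin u v P) : depth v = depth u + P.length := by
  induction P generalizing u with
  | nil => obtain rfl : u = v := h; rfl
  | cons e es ih => rw [ih h.2, hdepth, h.1, List.length_cons]; omega

theorem sum_paths_eq_sum_sum_append [Fintype V] {M : Type*} [AddCommMonoid M]
    {depth : V → ℕ} (hdepth : ∀ e, depth (efin e) = depth (einit e) + 1)
    {paths : V → V → Finset (List E)}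
    (hpaths : ∀ u v P, P ∈ paths u v ↔ IsPath einit efin u v P)
    {u w : V} {i : ℕ} (hui : depth u ≤ i) (hiw : i ≤ depth w) (φ : List E → M) :
    ∑ P ∈ paths u w, φ P =
      ∑ v ∈ univ.filter (fun v => depth v = i), ∑ P ∈ paths u v, ∑ Q ∈ paths v w, φ (P ++ Q) := by
  have length_eq {v v' : V} {P : List E} (h : IsPath einit efin v v' P) :
      P.length = depth v' - depth v := by
    have := h.depth_eq_add_length hdepth; omega
  simp_rw [← sum_product', sum_sigma']
  symm
  refine sum_nbij (fun x => x.2.1 ++ x.2.2) ?_ ?_ ?_ (fun _ _ => rfl)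
  · simp only [mem_sigma, mem_filter, mem_univ, true_and, mem_product, hpaths]
    exact fun x hx => isPath_append_iff.2 ⟨x.1, hx.2⟩
  · rintro ⟨v, P, Q⟩ hx ⟨v', P', Q'⟩ hx' hPQ
    simp only [coe_sigma, Set.mem_sigma_iff, mem_coe, mem_filter, mem_univ, true_and,
      coe_product, Set.mem_prod, hpaths] at hx hx' hPQ
    obtain ⟨rfl, rfl⟩ := List.append_inj hPQ
      (by rw [length_eq hx.2.1, length_eq hx'.2.1, hx.1, hx'.1])
    obtain rfl := hx.2.1.target_unique hx'.2.1
    rfl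
  · intro P hP
    simp only [mem_coe, hpaths] at hP
    set k := i - depth u
    obtain ⟨v, huv, hvB⟩ := isPath_append_iff.1 ((List.take_append_drop k P).symm ▸ hP)
    have hv : depth v = i := by
      rw [huv.depth_eq_add_length hdepth, List.length_take, length_eq hP]; omega
    exact ⟨⟨v, P.take k, P.drop k⟩, by simp [hpaths, hv, huv, hvB], List.take_append_drop k P⟩

theorem pathF_append (g : E → ℝ) (P Q : List E) :
    pathF g (P ++ Q) = pathF g P + pathF g Q := by
  simp [pathF]

theorem pathLam_append (lam : E → ℝ) (P Q : List E) :
    pathLam lam (P ++ Q) = pathLam lam P * pathLam lam Q := by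
  simp [pathLam]

theorem sum_sum_pathF_append_pow_mul (lam g : E → ℝ) (S T : Finset (List E))
    (m : ℕ) :
    ∑ P ∈ S, ∑ Q ∈ T, pathF g (P ++ Q) ^ m * pathLam lam (P ++ Q) =
      ∑ l ∈ range (m + 1), (m.choose l : ℝ) * (∑ P ∈ S, pathF g P ^ l * pathLam lam P) *
        ∑ Q ∈ T, pathF g Q ^ (m - l) * pathLam lam Q := by
  simp_rw [mul_assoc, sum_mul_sum, mul_sum, pathF_append, pathLam_append, add_pow, sum_mul]
  refine (sum_congr rfl fun P _ => sum_comm).trans <| sum_comm.trans <|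
    sum_congr rfl fun l _ => sum_congr rfl fun P _ => sum_congr rfl fun Q _ => by ring

end Trellis

theorem theta_decomposition_general {V E : Type*} [Fintype V]
    (einit efin : E → V) (depth : V → ℕ) (n : ℕ)
    (hdepth : ∀ e, depth (efin e) = depth (einit e) + 1)
    (A : V) (hA : depth A = 0) (B : V) (hB : depth B = n)
    (lam g : E → ℝ)
    (paths : V → V → Finset (List E))
    (hpaths : ∀ u v P, P ∈ paths u v ↔ IsPath einit efin u v P)
    (i : ℕ) (hi : i ≤ n) (m : ℕ) :
    ∑ P ∈ paths A B, pathF g P ^ m * pathLam lam P =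
      ∑ v ∈ Finset.univ.filter (fun v => depth v = i),
        ∑ l ∈ Finset.range (m + 1),
          (m.choose l : ℝ) * alphaNum lam g paths A l v *
            betaNum lam g paths B (m - l) v := by
  rw [sum_paths_eq_sum_sum_append hdepth hpaths (i := i) (by omega) (by omega)
    fun P => pathF g P ^ m * pathLam lam P]
  exact sum_congr rfl fun v _ => sum_sum_pathF_append_pow_mul lam g _ _ m

/-- **Decomposition of the trellis numerator at a depth** `0 ≤ i ≤ n`:
`θ^(m)(T) = Σ_{P : A → B} f(P)^m · λ(P)
  = Σ_{v : depth(v) = i} Σ_{l=0}^{m} C(m,l) · α^(l)(v) · β^(m−l)(v)`. -/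
theorem theta_decomposition {V E : Type*} [Fintype V] [Fintype E]
    (einit efin : E → V) (depth : V → ℕ) (n : ℕ)
    (hdepth : ∀ e, depth (efin e) = depth (einit e) + 1)
    (A : V) (hA : depth A = 0) (B : V) (hB : depth B = n)
    (lam g : E → ℝ)
    (paths : V → V → Finset (List E))
    (hpaths : ∀ u v P, P ∈ paths u v ↔ IsPath einit efin u v P)
    (i : ℕ) (hi : i ≤ n) (m : ℕ) :
    ∑ P ∈ paths A B, pathF g P ^ m * pathLam lam P =
      ∑ v ∈ Finset.univ.filter (fun v => depth v = i),
        ∑ l ∈ Finset.range (m + 1),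
          (m.choose l : ℝ) * alphaNum lam g paths A l v *
            betaNum lam g paths B (m - l) v :=
  theta_decomposition_general einit efin depth n hdepth A hA B hB lam g paths hpaths i hi m
end

section
/- Let v be a vertex of the trellis with depth(v) ≥ 1. Then the forward distribution satisfies the recursion α^D(v) = Σ_{e : fin(e) = v} λ(e) · (α^D(init(e)) ⊞ g(e)), and α^D(A) = δ₀ (the point mass at 0). (Forward distribution recursion, part of Theorem 6 of the paper.) -/
open Finset

/-- The forward distribution `α^D(v) = Σ_{P : A → v} λ(P) · δ_{f(P)}`
as a finitely supported function `ℝ →₀ ℝ`. -/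
noncomputable def alphaDist {V E : Type*} (lam g : E → ℝ)
    (paths : V → V → Finset (List E)) (A : V) (v : V) : ℝ →₀ ℝ :=
  ∑ P ∈ paths A v, pathLam lam P • Finsupp.single (pathF g P) (1 : ℝ)

/-- The backward distribution `β^D(v) = Σ_{P : v → B} λ(P) · δ_{f(P)}`. -/
noncomputable def betaDist {V E : Type*} (lam g : E → ℝ)
    (paths : V → V → Finset (List E)) (B : V) (v : V) : ℝ →₀ ℝ :=
  ∑ P ∈ paths v B, pathLam lam P • Finsupp.single (pathF g P) (1 : ℝ)

/-- Shift `a ⊞ b` of the domain of a finitely supported function `a` by `b`: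
`(a ⊞ b)(u) = a(u − b)`, i.e. `Σ_u a(u) · δ_{u+b}`. -/
noncomputable def fshift (a : ℝ →₀ ℝ) (b : ℝ) : ℝ →₀ ℝ :=
  Finsupp.mapDomain (fun u => u + b) a

/-- Convolution of finitely supported functions: `(a * b)(u) = Σ_{s+t=u} a(s) · b(t)`,
so that `δ_s * δ_t = δ_{s+t}` (multiplication in `AddMonoidAlgebra ℝ ℝ`). -/
noncomputable def conv (a b : ℝ →₀ ℝ) : ℝ →₀ ℝ :=
  a.sum fun s as => b.sum fun t bt => Finsupp.single (s + t) (as * bt)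


lemma isPath_length_depth {V E : Type*} (einit efin : E → V) (depth : V → ℕ)
    (hdepth : ∀ e, depth (efin e) = depth (einit e) + 1) :
    ∀ (P : List E) (u v : V), IsPath einit efin u v P → depth v = depth u + P.length := by
  intro P
  induction P with
  | nil => intro u v h; simp only [IsPath] at h; simp [h]
  | cons e es ih =>
    intro u v h
    obtain ⟨h1, h2⟩ := h
    have := ih (efin e) v h2
    rw [this, hdepth e, h1, List.length_cons]
    omega

lemma isPath_append_singleton {V E : Type*} (einit efin : E → V) :
    ∀ (P : List E) (u v : V) (e : E),
      IsPath einit efin u v (P ++ [e]) ↔ IsPath einit efin u (einit e) P ∧ efin e = v := by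
  intro P
  induction P with
  | nil =>
    intro u v e
    simp only [List.nil_append, IsPath]
    constructor
    · rintro ⟨h1, h2⟩; exact ⟨h1.symm, h2⟩
    · rintro ⟨h1, h2⟩; exact ⟨h1.symm, h2⟩
  | cons f fs ih =>
    intro u v e
    simp only [List.cons_append, IsPath, List.append_eq, ih]
    tauto

/-- **Forward distribution recursion** (part of Theorem 6). `α^D(A) = δ₀` and, for a
vertex `v` with `depth(v) ≥ 1`,
`α^D(v) = Σ_{e : fin(e) = v} λ(e) · (α^D(init(e)) ⊞ g(e))`. -/
theorem forward_distribution_recursion {V E : Type*} [Fintype V] [Fintype E]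
    [DecidableEq V]
    (einit efin : E → V) (depth : V → ℕ) (n : ℕ)
    (hdepth : ∀ e, depth (efin e) = depth (einit e) + 1)
    (A : V) (hA : depth A = 0) (B : V) (hB : depth B = n)
    (lam g : E → ℝ)
    (paths : V → V → Finset (List E))
    (hpaths : ∀ u v P, P ∈ paths u v ↔ IsPath einit efin u v P)
    (v : V) (hv : 1 ≤ depth v) :
    alphaDist lam g paths A A = Finsupp.single 0 1 ∧
    alphaDist lam g paths A v =
      ∑ e ∈ Finset.univ.filter (fun e => efin e = v),
        lam e • fshift (alphaDist lam g paths A (einit e)) (g e) := by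
  have hpA : paths A A = {[]} := by
    ext P
    simp only [hpaths, Finset.mem_singleton]
    constructor
    · intro h
      cases P with
      | nil => rfl
      | cons e es =>
        have := isPath_length_depth einit efin depth hdepth _ _ _ h
        simp [hA] at this
    · rintro rfl
      show A = A
      rfl
  have hne : ∀ Q ∈ paths A v, Q ≠ [] := by
    intro Q hQ hQn
    subst hQn
    have : A = v := (hpaths A v []).1 hQ
    subst this
    omega
  constructor
  · simp [alphaDist, hpA, pathLam, pathF]
  · have hrhs : ∀ e : E, lam e • fshift (alphaDist lam g paths A (einit e)) (g e)
        = ∑ P ∈ paths A (einit e),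
            pathLam lam (P ++ [e]) • Finsupp.single (pathF g (P ++ [e])) (1 : ℝ) := by
      intro e
      simp only [alphaDist, fshift, Finsupp.mapDomain_finset_sum, Finsupp.mapDomain_smul,
        Finsupp.mapDomain_single, Finset.smul_sum, smul_smul]
      refine Finset.sum_congr rfl fun P _ => ?_
      simp [pathLam, pathF, mul_comm]
    simp only [hrhs]
    rw [Finset.sum_sigma']
    refine Finset.sum_bij'
      (fun Q hQ => (⟨Q.getLast (hne Q hQ), Q.dropLast⟩ : Σ _ : E, List E))
      (fun p _ => p.2 ++ [p.1]) ?_ ?_ ?_ ?_ ?_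
    · intro Q hQ
      have hQ' : IsPath einit efin A v Q := (hpaths A v Q).1 hQ
      have hsplit : Q.dropLast ++ [Q.getLast (hne Q hQ)] = Q :=
        List.dropLast_append_getLast (hne Q hQ)
      rw [← hsplit] at hQ'
      rw [isPath_append_singleton] at hQ'
      simp only [Finset.mem_sigma, Finset.mem_filter, Finset.mem_univ, true_and]
      exact ⟨hQ'.2, (hpaths _ _ _).2 hQ'.1⟩
    · intro p hp
      simp only [Finset.mem_sigma, Finset.mem_filter, Finset.mem_univ, true_and] at hp
      refine (hpaths A v _).2 ?_
      rw [isPath_append_singleton]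
      exact ⟨(hpaths _ _ _).1 hp.2, hp.1⟩
    · intro Q hQ
      exact List.dropLast_append_getLast (hne Q hQ)
    · intro p hp
      simp
    · intro Q hQ
      rw [List.dropLast_append_getLast (hne Q hQ)]
end

section
/- Let v be a vertex of the trellis with depth(v) < n. Then the backward distribution satisfies the recursion β^D(v) = Σ_{e : init(e) = v} λ(e) · (β^D(fin(e)) ⊞ g(e)), and β^D(B) = δ₀ (the point mass at 0). (Backward distribution recursion, part of Theorem 6 of the paper.) -/
open Finset

lemma isPath_depth {V E : Type*} (einit efin : E → V) (depth : V → ℕ)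
    (hdepth : ∀ e, depth (efin e) = depth (einit e) + 1) :
    ∀ P : List E, ∀ u v, IsPath einit efin u v P → depth v = depth u + P.length := by
  intro P
  induction P with
  | nil => intro u v h; cases h; simp
  | cons e es ih =>
    intro u v h
    obtain ⟨h1, h2⟩ := h
    have := ih (efin e) v h2
    rw [this, hdepth, h1]
    simp; omega

/-- **Backward distribution recursion** (part of Theorem 6). `β^D(B) = δ₀` and, for a
vertex `v` with `depth(v) < n`,
`β^D(v) = Σ_{e : init(e) = v} λ(e) · (β^D(fin(e)) ⊞ g(e))`. -/
theorem backward_distribution_recursion {V E : Type*} [Fintype V] [Fintype E]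
    [DecidableEq V]
    (einit efin : E → V) (depth : V → ℕ) (n : ℕ)
    (hdepth : ∀ e, depth (efin e) = depth (einit e) + 1)
    (A : V) (hA : depth A = 0) (B : V) (hB : depth B = n)
    (lam g : E → ℝ)
    (paths : V → V → Finset (List E))
    (hpaths : ∀ u v P, P ∈ paths u v ↔ IsPath einit efin u v P)
    (v : V) (hv : depth v < n) :
    betaDist lam g paths B B = Finsupp.single 0 1 ∧
    betaDist lam g paths B v =
      ∑ e ∈ Finset.univ.filter (fun e => einit e = v),
        lam e • fshift (betaDist lam g paths B (efin e)) (g e) := by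
  classical
  have hne : v ≠ B := by
    intro h; rw [h, hB] at hv; omega
  constructor
  · have hBB : paths B B = {[]} := by
      ext P
      rw [hpaths]
      constructor
      · intro h
        cases P with
        | nil => simp
        | cons e es =>
          have := isPath_depth einit efin depth hdepth (e :: es) B B h
          simp at this
      · intro h
        simp at h
        subst h
        exact rfl
    simp [betaDist, hBB, pathLam, pathF]
  · have key : paths v B = (Finset.univ.filter (fun e => einit e = v)).biUnion
        (fun e => (paths (efin e) B).image (e :: ·)) := by
      ext P
      simp only [Finset.mem_biUnion, Finset.mem_filter, Finset.mem_univ, true_and,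
        Finset.mem_image, hpaths]
      constructor
      · intro h
        cases P with
        | nil => exact absurd h hne
        | cons e es => exact ⟨e, h.1, es, h.2, rfl⟩
      · rintro ⟨e, he, es, hes, rfl⟩
        exact ⟨he, hes⟩
    have hdisj : (↑(Finset.univ.filter (fun e : E => einit e = v)) : Set E).PairwiseDisjoint
        (fun e => (paths (efin e) B).image (e :: ·)) := by
      intro e1 _ e2 _ hne12
      simp only [Finset.disjoint_left, Finset.mem_image]
      rintro P ⟨P1, _, rfl⟩ ⟨P2, _, h⟩
      exact hne12 (List.head_eq_of_cons_eq h.symm)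
    rw [betaDist, key, Finset.sum_biUnion hdisj]
    refine Finset.sum_congr rfl fun e he => ?_
    rw [Finset.sum_image (fun a _ b _ h => List.tail_eq_of_cons_eq h)]
    rw [fshift, betaDist, Finsupp.mapDomain_finset_sum, Finset.smul_sum]
    refine Finset.sum_congr rfl fun P hP => ?_
    rw [Finsupp.mapDomain_smul, Finsupp.mapDomain_single]
    simp [pathLam, pathF, smul_smul, add_comm]
end

section
/- Fix a depth i with 1 ≤ i ≤ n and a c-label value x ∈ X. Then the symbol distribution Ω_i^D(x) = Σ_{P : A → B, c(e_i) = x} λ(P) · δ_{f(P)} (where e_i is the i-th edge of P) satisfies Ω_i^D(x) = Σ_{e : depth(fin(e)) = i, c(e) = x} λ(e) · ((α^D(init(e)) ⊞ g(e)) * β^D(fin(e))), where * denotes convolution of finitely supported functions. (Symbol distribution formula, part of Theorem 6 of the paper.) -/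
open Finset

/-!
Depth increases by one along every edge, so a path `A → B` has at most one edge ending at
depth `i`, and cutting it there writes the path uniquely as `P₁ ++ e :: P₂` with `P₁ : A → init e`
and `P₂ : fin e → B`. Across the cut `λ` multiplies and `f` adds, which is exactly how the
shifted forward distribution at `init e` convolves with the backward distribution at `fin e`.
-/

namespace IsPath

variable {V E : Type*} {einit efin : E → V}

theorem append_cons_iff {u v : V} {P₁ P₂ : List E} {e : E} :
    IsPath einit efin u v (P₁ ++ e :: P₂) ↔
      IsPath einit efin u (einit e) P₁ ∧ IsPath einit efin (efin e) v P₂ := by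
  induction P₁ generalizing u with
  | nil => simp [IsPath, eq_comm]
  | cons f P₁ ih => simp [IsPath, ih, and_assoc]

theorem depth_eq {depth : V → ℕ} (hdepth : ∀ e, depth (efin e) = depth (einit e) + 1)
    {u v : V} {P : List E} (hP : IsPath einit efin u v P) :
    depth v = depth u + P.length := by
  induction P generalizing u with
  | nil => simp [IsPath] at hP; simp [hP]
  | cons e P ih =>
    obtain ⟨rfl, hP⟩ := hP
    rw [ih hP, hdepth, List.length_cons]
    omega

end IsPath

theorem pathLam_append_cons {E : Type*} (lam : E → ℝ) (P₁ P₂ : List E) (e : E) :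
    pathLam lam (P₁ ++ e :: P₂) = lam e * (pathLam lam P₁ * pathLam lam P₂) := by
  simp only [pathLam, List.map_append, List.map_cons, List.prod_append, List.prod_cons]
  ring

theorem pathF_append_cons {E : Type*} (g : E → ℝ) (P₁ P₂ : List E) (e : E) :
    pathF g (P₁ ++ e :: P₂) = pathF g P₁ + g e + pathF g P₂ := by
  simp only [pathF, List.map_append, List.map_cons, List.sum_append, List.sum_cons]
  ring

theorem conv_eq_coeff_mul (a b : ℝ →₀ ℝ) :
    conv a b = (AddMonoidAlgebra.ofCoeff a * AddMonoidAlgebra.ofCoeff b).coeff := by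
  rw [AddMonoidAlgebra.mul_def]
  simp only [conv, AddMonoidAlgebra.coeff_finsuppSum, AddMonoidAlgebra.coeff_single]

theorem conv_sum_single {ι κ : Type*} (s : Finset ι) (t : Finset κ) (x r : ι → ℝ)
    (y q : κ → ℝ) :
    conv (∑ i ∈ s, Finsupp.single (x i) (r i)) (∑ j ∈ t, Finsupp.single (y j) (q j)) =
      ∑ p ∈ s ×ˢ t, Finsupp.single (x p.1 + y p.2) (r p.1 * q p.2) := by
  simp only [conv_eq_coeff_mul, AddMonoidAlgebra.ofCoeff_sum, Finset.sum_mul_sum,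
    AddMonoidAlgebra.ofCoeff_single, AddMonoidAlgebra.single_mul_single,
    AddMonoidAlgebra.coeff_sum, AddMonoidAlgebra.coeff_single, Finset.sum_product]

theorem fshift_sum_single {ι : Type*} (s : Finset ι) (x r : ι → ℝ) (b : ℝ) :
    fshift (∑ i ∈ s, Finsupp.single (x i) (r i)) b =
      ∑ i ∈ s, Finsupp.single (x i + b) (r i) := by
  simp only [fshift, Finsupp.mapDomain_finsetSum, Finsupp.mapDomain_single]

theorem smul_conv_fshift_alphaDist_betaDist {V E : Type*} (lam g : E → ℝ)
    (paths : V → V → Finset (List E)) (A B : V) (e : E) (u v : V) :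
    lam e • conv (fshift (alphaDist lam g paths A u) (g e)) (betaDist lam g paths B v) =
      ∑ q ∈ paths A u ×ˢ paths v B,
        pathLam lam (q.1 ++ e :: q.2) • Finsupp.single (pathF g (q.1 ++ e :: q.2)) (1 : ℝ) := by
  simp only [alphaDist, betaDist, fshift_sum_single, conv_sum_single, Finset.smul_sum,
    Finsupp.smul_single, smul_eq_mul, mul_one, pathLam_append_cons, pathF_append_cons]

theorem sum_filter_paths_eq_sum_edge_split {V E M : Type*} [Fintype E] [AddCommMonoid M]
    {einit efin : E → V} {depth : V → ℕ} (hdepth : ∀ e, depth (efin e) = depth (einit e) + 1)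
    {paths : V → V → Finset (List E)} (hpaths : ∀ u v P, P ∈ paths u v ↔ IsPath einit efin u v P)
    (A B : V) (i : ℕ) (p : E → Prop) [DecidablePred p] (F : List E → M) :
    ∑ P ∈ (paths A B).filter (fun P => ∃ e ∈ P, depth (efin e) = i ∧ p e), F P =
      ∑ e ∈ Finset.univ.filter (fun e => depth (efin e) = i ∧ p e),
        ∑ q ∈ paths A (einit e) ×ˢ paths (efin e) B, F (q.1 ++ e :: q.2) := by
  rw [Finset.sum_sigma']
  symm
  refine Finset.sum_bij (fun q _ => q.2.1 ++ q.1 :: q.2.2) ?_ ?_ ?_ fun _ _ => rfl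
  all_goals simp only [Finset.mem_sigma, Finset.mem_filter, Finset.mem_univ, true_and,
    Finset.mem_product, hpaths]
  · rintro ⟨e, P₁, P₂⟩ ⟨hpe, hP₁, hP₂⟩
    exact ⟨IsPath.append_cons_iff.2 ⟨hP₁, hP₂⟩, e, by simp, hpe⟩
  · rintro ⟨e, P₁, P₂⟩ ⟨⟨hde, -⟩, hP₁, -⟩ ⟨e', P₁', P₂'⟩ ⟨⟨hde', -⟩, hP₁', -⟩ heq
    dsimp only at hde hde' hP₁ hP₁' heq
    -- both prefixes run from `A` to a vertex of depth `i - 1`, so they have the same length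
    have hlen : P₁.length = P₁'.length := by
      have := hP₁.depth_eq hdepth
      have := hP₁'.depth_eq hdepth
      have := hdepth e
      have := hdepth e'
      omega
    obtain ⟨rfl, hcons⟩ := List.append_inj heq hlen
    obtain ⟨rfl, rfl⟩ := List.cons_eq_cons.1 hcons
    rfl
  · rintro P ⟨hP, e, he, hpe⟩
    obtain ⟨P₁, P₂, rfl⟩ := List.append_of_mem he
    exact ⟨⟨e, P₁, P₂⟩, ⟨hpe, IsPath.append_cons_iff.1 hP⟩, rfl⟩

theorem symbol_distribution_general {V E X : Type*} [Fintype E] [DecidableEq X]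
    (einit efin : E → V) (depth : V → ℕ)
    (hdepth : ∀ e, depth (efin e) = depth (einit e) + 1)
    (A : V) (B : V)
    (lam g : E → ℝ) (c : E → X)
    (paths : V → V → Finset (List E))
    (hpaths : ∀ u v P, P ∈ paths u v ↔ IsPath einit efin u v P)
    (i : ℕ) (x : X) :
    ∑ P ∈ (paths A B).filter (fun P => ∃ e ∈ P, depth (efin e) = i ∧ c e = x),
        pathLam lam P • Finsupp.single (pathF g P) (1 : ℝ) =
      ∑ e ∈ Finset.univ.filter (fun e => depth (efin e) = i ∧ c e = x),
        lam e • conv (fshift (alphaDist lam g paths A (einit e)) (g e))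
          (betaDist lam g paths B (efin e)) := by
  rw [sum_filter_paths_eq_sum_edge_split hdepth hpaths A B i (c · = x)]
  exact Finset.sum_congr rfl fun e _ =>
    (smul_conv_fshift_alphaDist_betaDist lam g paths A B e _ _).symm

/-- **Symbol distribution formula** (part of Theorem 6). For a depth `1 ≤ i ≤ n` and
c-label value `x`, the symbol distribution
`Ω_i^D(x) = Σ_{P : A → B, c(e_i) = x} λ(P) · δ_{f(P)}` (where the `i`-th edge `e_i` of a
path `P : A → B` is its unique edge with `depth(fin(e_i)) = i`) satisfies
`Ω_i^D(x) = Σ_{e : depth(fin(e)) = i, c(e) = x} λ(e) · ((α^D(init(e)) ⊞ g(e)) * β^D(fin(e)))`. -/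
theorem symbol_distribution {V E X : Type*} [Fintype V] [Fintype E] [DecidableEq X]
    (einit efin : E → V) (depth : V → ℕ) (n : ℕ)
    (hdepth : ∀ e, depth (efin e) = depth (einit e) + 1)
    (A : V) (hA : depth A = 0) (B : V) (hB : depth B = n)
    (lam g : E → ℝ) (c : E → X)
    (paths : V → V → Finset (List E))
    (hpaths : ∀ u v P, P ∈ paths u v ↔ IsPath einit efin u v P)
    (i : ℕ) (hi1 : 1 ≤ i) (hin : i ≤ n) (x : X) :
    ∑ P ∈ (paths A B).filter (fun P => ∃ e ∈ P, depth (efin e) = i ∧ c e = x),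
        pathLam lam P • Finsupp.single (pathF g P) (1 : ℝ) =
      ∑ e ∈ Finset.univ.filter (fun e => depth (efin e) = i ∧ c e = x),
        lam e • conv (fshift (alphaDist lam g paths A (einit e)) (g e))
          (betaDist lam g paths B (efin e)) :=
  symbol_distribution_general einit efin depth hdepth A B lam g c paths hpaths i x
end
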